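/- Let G : ℝ → ℝ be nondecreasing, with G integrable with respect to the standard Gaussian measure γ and with y ↦ y·G(y) integrable with respect to γ. If G is not γ-almost everywhere equal to a constant, then ∫ y·G(y) dγ(y) > 0; i.e. the first Hermite coefficient J_1(G) = E[η·G(η)] of a nonconstant nondecreasing subordinating function is strictly positive. -/

import Mathlib

/-!
Since `γ` is centred, `∫ y G(y) dγ = ∫ y (G(y) - G(0)) dγ`. By monotonicity the integrand
`y (G(y) - G(0))` is nonnegative, so the integral can only vanish if the integrand vanishes
`γ`-a.e.; as `γ` has no atoms, `y ≠ 0` a.e., which would force `G = G(0)` a.e.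
-/

open MeasureTheory ProbabilityTheory

lemma Monotone.sub_mul_sub_nonneg {α : Type*} [Ring α] [LinearOrder α] [IsStrictOrderedRing α]
    {f : α → α} (hf : Monotone f) {x a : α} : 0 ≤ (x - a) * (f x - f a) := by
  rcases le_total a x with hax | hxa
  · exact mul_nonneg (sub_nonneg.mpr hax) (sub_nonneg.mpr (hf hax))
  · exact mul_nonneg_of_nonpos_of_nonpos (sub_nonpos.mpr hxa) (sub_nonpos.mpr (hf hxa))

section MeasureOnReal

variable {μ : Measure ℝ} {G : ℝ → ℝ}

lemma integral_sub_mul_sub_pos_of_monotone [NullSingletonClass μ] (hG : Monotone G) (a : ℝ)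
    (hint : Integrable (fun y => (y - a) * (G y - G a)) μ)
    (hnc : ¬ ∃ c : ℝ, G =ᵐ[μ] fun _ => c) :
    0 < ∫ y, (y - a) * (G y - G a) ∂μ := by
  have hnonneg : 0 ≤ fun y => (y - a) * (G y - G a) := fun _ => hG.sub_mul_sub_nonneg
  refine (integral_nonneg hnonneg).lt_of_ne fun hzero => hnc ⟨G a, ?_⟩
  filter_upwards [(integral_eq_zero_iff_of_nonneg hnonneg hint).mp hzero.symm, μ.ae_ne a]
    with y hy hya
  simpa [sub_eq_zero, hya] using hy

lemma integral_mul_eq_integral_mul_sub_apply_zero (hid : Integrable (fun y => y) μ)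
    (hmean : ∫ y, y ∂μ = 0) (hint : Integrable (fun y => y * G y) μ) :
    ∫ y, y * G y ∂μ = ∫ y, y * (G y - G 0) ∂μ := by
  simp_rw [mul_sub]
  rw [integral_sub hint (hid.mul_const _), integral_mul_const, hmean, zero_mul, sub_zero]

end MeasureOnReal

theorem stmt_4_general (G : ℝ → ℝ) (hG : Monotone G)
    (hInt2 : Integrable (fun y => y * G y) (gaussianReal 0 1))
    (hnc : ¬ ∃ c : ℝ, G =ᵐ[gaussianReal 0 1] fun _ => c) :
    0 < ∫ y, y * G y ∂(gaussianReal 0 1) := by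
  have : NullSingletonClass (gaussianReal 0 1) := nullSingletonClass_gaussianReal one_ne_zero
  have hid : Integrable (fun y : ℝ => y) (gaussianReal 0 1) := IsGaussian.integrable_id
  rw [integral_mul_eq_integral_mul_sub_apply_zero hid integral_id_gaussianReal hInt2]
  have hint : Integrable (fun y => y * (G y - G 0)) (gaussianReal 0 1) :=
    (hInt2.sub (hid.mul_const (G 0))).congr (ae_of_all _ fun y => (mul_sub y _ _).symm)
  simpa only [sub_zero] using
    integral_sub_mul_sub_pos_of_monotone hG 0 (by simpa only [sub_zero] using hint) hnc

/-- If `G` is nondecreasing, integrable against the standard Gaussian measure `γ` together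
with `y ↦ y·G(y)`, and `G` is not `γ`-a.e. constant, then the first Hermite coefficient
`J₁(G) = ∫ y·G(y) dγ(y)` is strictly positive. -/
theorem stmt_4 (G : ℝ → ℝ) (hG : Monotone G)
    (hInt : Integrable G (gaussianReal 0 1))
    (hInt2 : Integrable (fun y => y * G y) (gaussianReal 0 1))
    (hnc : ¬ ∃ c : ℝ, G =ᵐ[gaussianReal 0 1] fun _ => c) :
    0 < ∫ y, y * G y ∂(gaussianReal 0 1) :=
  stmt_4_general G hG hInt2 hnc
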